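/- arXiv:2411.12863 — 2 statements merged into one kernel-verified Lean document; each statement's English description precedes it below -/
import Mathlib

section
/- Let G = H ∘ {X_i : 1 ≤ i ≤ n(H)} be the corona of a graph H with graphs X_1, ..., X_{n(H)}, and let F = {v_i ∈ V(H) : μ(X_i) = μ(v_i ∘ X_i)}, i.e., the set of vertices v_i such that X_i has a perfect matching. Then μ(G) = μ(H[F]) + Σ_{i=1}^{n(H)} μ(v_i ∘ X_i). -/
open SimpleGraph

/-- The independence number: the maximum size of an independent set of vertices. -/
noncomputable def indepNum {V : Type*} (G : SimpleGraph V) : ℕ :=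
  sSup {n | ∃ s : Finset V, (∀ x ∈ s, ∀ y ∈ s, ¬ G.Adj x y) ∧ s.card = n}

/-- The matching number: the maximum size (number of edges) of a matching. -/
noncomputable def matchNum {V : Type*} (G : SimpleGraph V) : ℕ :=
  sSup {n | ∃ M : G.Subgraph, M.IsMatching ∧ M.edgeSet.ncard = n}

/-- The cone `v ∘ X`: a new vertex (`none`) joined to all vertices of `X`. -/
noncomputable def cone {β : Type*} (X : SimpleGraph β) : SimpleGraph (Option β) :=
  SimpleGraph.fromRel (fun u v =>
    u = none ∨ ∃ a b, u = some a ∧ v = some b ∧ X.Adj a b)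

/-- The corona `H ∘ {X i}`: each vertex `i` of `H` is joined to all vertices of `X i`. -/
noncomputable def corona {α : Type*} {β : α → Type*} (H : SimpleGraph α)
    (X : ∀ i, SimpleGraph (β i)) : SimpleGraph (α ⊕ Σ i, β i) :=
  SimpleGraph.fromRel (fun u v =>
    match u, v with
    | Sum.inl a, Sum.inl b => H.Adj a b
    | Sum.inl a, Sum.inr p => a = p.1
    | Sum.inr p, Sum.inr q => ∃ h : p.1 = q.1, (X q.1).Adj (h ▸ p.2) q.2
    | _, _ => False)

/-- A König-Egerváry graph: `α(G) + μ(G) = n(G)`. -/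
def IsKonigEgervary {V : Type*} [Fintype V] (G : SimpleGraph V) : Prop :=
  _root_.indepNum G + matchNum G = Fintype.card V

/-- A 1-König-Egerváry graph: `α(G) + μ(G) = n(G) - 1`. -/
def IsOneKonigEgervary {V : Type*} [Fintype V] (G : SimpleGraph V) : Prop :=
  _root_.indepNum G + matchNum G + 1 = Fintype.card V

/-- An almost perfect matching: a matching leaving exactly one vertex unsaturated. -/
def IsAlmostPerfectMatching {V : Type*} {G : SimpleGraph V} (M : G.Subgraph) : Prop :=
  M.IsMatching ∧ ∃ v, M.verts = {v}ᶜ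



/-- A matching given as a finite set of edges. -/
def EdgeMatching {V : Type*} (G : SimpleGraph V) (s : Finset (Sym2 V)) : Prop :=
  (↑s ⊆ G.edgeSet) ∧ ∀ e ∈ s, ∀ f ∈ s, e ≠ f → ∀ v, v ∈ e → v ∉ f

noncomputable def emNum {V : Type*} (G : SimpleGraph V) : ℕ :=
  sSup {n | ∃ s : Finset (Sym2 V), EdgeMatching G s ∧ s.card = n}

lemma edgeMatching_empty {V : Type*} (G : SimpleGraph V) : EdgeMatching G ∅ := by
  constructor
  · simp
  · simp

lemma em_bddAbove {V : Type*} [Finite V] (G : SimpleGraph V) :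
    BddAbove {n | ∃ s : Finset (Sym2 V), EdgeMatching G s ∧ s.card = n} := by
  have := Fintype.ofFinite (Sym2 V)
  refine ⟨Fintype.card (Sym2 V), ?_⟩
  rintro n ⟨s, _, rfl⟩
  exact Finset.card_le_univ s

lemma le_emNum {V : Type*} [Finite V] {G : SimpleGraph V} {s : Finset (Sym2 V)}
    (h : EdgeMatching G s) : s.card ≤ emNum G :=
  le_csSup (em_bddAbove G) ⟨s, h, rfl⟩

lemma emNum_le {V : Type*} {G : SimpleGraph V} {k : ℕ}
    (h : ∀ s : Finset (Sym2 V), EdgeMatching G s → s.card ≤ k) : emNum G ≤ k :=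
  csSup_le ⟨0, ∅, edgeMatching_empty G, rfl⟩ (by rintro n ⟨s, hs, rfl⟩; exact h s hs)

lemma exists_max_em {V : Type*} [Finite V] (G : SimpleGraph V) :
    ∃ s : Finset (Sym2 V), EdgeMatching G s ∧ s.card = emNum G := by
  have h := Nat.sSup_mem (s := {n | ∃ s : Finset (Sym2 V), EdgeMatching G s ∧ s.card = n})
    ⟨0, ∅, edgeMatching_empty G, rfl⟩ (em_bddAbove G)
  obtain ⟨s, hs, hc⟩ := h
  exact ⟨s, hs, hc⟩

lemma matchNum_eq_emNum {V : Type*} [Finite V] (G : SimpleGraph V) :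
    matchNum G = emNum G := by
  classical
  have : Fintype V := Fintype.ofFinite V
  unfold matchNum emNum
  congr 1
  ext n
  constructor
  · rintro ⟨M, hM, rfl⟩
    refine ⟨M.edgeSet.toFinset, ⟨?_, ?_⟩, ?_⟩
    · intro e he
      rw [Finset.mem_coe, Set.mem_toFinset] at he
      exact M.edgeSet_subset he
    · intro e he f hf hne v hve hvf
      simp only [Set.mem_toFinset] at he hf
      obtain ⟨b, rfl⟩ := Sym2.mem_iff_exists.1 hve
      obtain ⟨c, rfl⟩ := Sym2.mem_iff_exists.1 hvf
      rw [Subgraph.mem_edgeSet] at he hf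
      obtain ⟨w, -, hw⟩ := hM (M.edge_vert he)
      exact hne (by rw [hw _ he, hw _ hf])
    · exact (Set.ncard_eq_toFinset_card' _).symm
  · rintro ⟨s, ⟨hsub, hdis⟩, rfl⟩
    refine ⟨⟨{v | ∃ e ∈ s, v ∈ e}, fun a b => s(a,b) ∈ s, ?_, ?_, ?_⟩, ?_, ?_⟩
    · intro a b h
      exact (mem_edgeSet G).1 (hsub h)
    · intro a b h
      exact ⟨s(a,b), h, Sym2.mem_mk_left a b⟩
    · refine ⟨fun a b h => ?_⟩
      simpa only [Sym2.eq_swap] using h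
    · rintro v ⟨e, he, hve⟩
      obtain ⟨w, rfl⟩ := Sym2.mem_iff_exists.1 hve
      refine ⟨w, he, fun y hy => ?_⟩
      by_contra hne
      have : s(v, y) ≠ s(v, w) := fun h => hne (Sym2.congr_right.1 h)
      exact hdis _ hy _ he this v (Sym2.mem_mk_left v y) (Sym2.mem_mk_left v w)
    · have hset : (⟨{v | ∃ e ∈ s, v ∈ e}, fun a b => s(a,b) ∈ s,
          fun {a b} h => (mem_edgeSet G).1 (hsub h),
          fun {a b} h => ⟨s(a,b), h, Sym2.mem_mk_left a b⟩,
          ⟨fun a b h => by simpa only [Sym2.eq_swap] using h⟩⟩ : G.Subgraph).edgeSet = ↑s := by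
        ext e
        induction e using Sym2.ind with
        | _ a b => simp [Subgraph.mem_edgeSet]
      rw [hset, Set.ncard_coe_finset]

/-- Support (set of covered vertices) of an edge set. -/
def emSupp {V : Type*} (s : Finset (Sym2 V)) : Set V := {v | ∃ e ∈ s, v ∈ e}

lemma mem_emSupp_of {V : Type*} {s : Finset (Sym2 V)} {e : Sym2 V} {v : V}
    (he : e ∈ s) (hv : v ∈ e) : v ∈ emSupp s := ⟨e, he, hv⟩

lemma emSupp_image {V W : Type*} [DecidableEq (Sym2 W)] {s : Finset (Sym2 V)} {g : V → W} {v : W}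
    (hv : v ∈ emSupp (s.image (Sym2.map g))) : ∃ u ∈ emSupp s, g u = v := by
  obtain ⟨e', he', hve'⟩ := hv
  obtain ⟨e, he, rfl⟩ := Finset.mem_image.1 he'
  obtain ⟨u, hu, rfl⟩ := Sym2.mem_map.1 hve'
  exact ⟨u, ⟨e, he, hu⟩, rfl⟩

lemma em_map {V W : Type*} [DecidableEq (Sym2 W)] {G : SimpleGraph V} {G' : SimpleGraph W}
    {s : Finset (Sym2 V)} (g : V → W)
    (hadj : ∀ a b, s(a,b) ∈ s → G'.Adj (g a) (g b))
    (hinj : ∀ v ∈ emSupp s, ∀ w ∈ emSupp s, g v = g w → v = w)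
    (hem : EdgeMatching G s) :
    EdgeMatching G' (s.image (Sym2.map g)) ∧ (s.image (Sym2.map g)).card = s.card := by
  classical
  obtain ⟨hsub, hdis⟩ := hem
  refine ⟨⟨?_, ?_⟩, ?_⟩
  · intro e' he'
    rw [Finset.mem_coe, Finset.mem_image] at he'
    obtain ⟨e, he, rfl⟩ := he'
    induction e using Sym2.ind with
    | _ a b => rw [Sym2.map_pair_eq, mem_edgeSet]; exact hadj a b he
  · intro e' he' f' hf' hne v hve hvf
    obtain ⟨e, he, rfl⟩ := Finset.mem_image.1 he'
    obtain ⟨f, hf, rfl⟩ := Finset.mem_image.1 hf'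
    obtain ⟨u1, hu1, hgu1⟩ := Sym2.mem_map.1 hve
    obtain ⟨u2, hu2, hgu2⟩ := Sym2.mem_map.1 hvf
    have hu12 : u1 = u2 := hinj u1 ⟨e, he, hu1⟩ u2 ⟨f, hf, hu2⟩ (hgu1.trans hgu2.symm)
    subst hu12
    rcases eq_or_ne e f with rfl | hef
    · exact hne rfl
    · exact hdis e he f hf hef u1 hu1 hu2
  · refine Finset.card_image_of_injOn ?_
    intro e he f hf heq
    induction e using Sym2.ind with
    | _ a b =>
      induction f using Sym2.ind with
      | _ c d =>
        rw [Sym2.map_pair_eq, Sym2.map_pair_eq, Sym2.eq_iff] at heq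
        have ha := mem_emSupp_of he (Sym2.mem_mk_left a b)
        have hb := mem_emSupp_of he (Sym2.mem_mk_right a b)
        have hc := mem_emSupp_of hf (Sym2.mem_mk_left c d)
        have hd := mem_emSupp_of hf (Sym2.mem_mk_right c d)
        rcases heq with ⟨h1, h2⟩ | ⟨h1, h2⟩
        · rw [hinj a ha c hc h1, hinj b hb d hd h2]
        · rw [hinj a ha d hd h1, hinj b hb c hc h2, Sym2.eq_swap]

lemma em_union {V : Type*} [DecidableEq (Sym2 V)] {G : SimpleGraph V} {s t : Finset (Sym2 V)}
    (hs : EdgeMatching G s) (ht : EdgeMatching G t)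
    (hd : ∀ v ∈ emSupp s, v ∉ emSupp t) :
    EdgeMatching G (s ∪ t) ∧ (s ∪ t).card = s.card + t.card := by
  classical
  refine ⟨⟨?_, ?_⟩, ?_⟩
  · intro e he
    rw [Finset.mem_coe, Finset.mem_union] at he
    rcases he with he | he
    · exact hs.1 he
    · exact ht.1 he
  · intro e he f hf hne v hve hvf
    rw [Finset.mem_union] at he hf
    rcases he with he | he <;> rcases hf with hf | hf
    · exact hs.2 e he f hf hne v hve hvf
    · exact hd v ⟨e, he, hve⟩ ⟨f, hf, hvf⟩
    · exact hd v ⟨f, hf, hvf⟩ ⟨e, he, hve⟩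
    · exact ht.2 e he f hf hne v hve hvf
  · refine Finset.card_union_of_disjoint (Finset.disjoint_left.2 ?_)
    intro e he het
    have hv : e.out.1 ∈ e := Sym2.out_fst_mem e
    set v := e.out.1
    exact hd v ⟨e, he, hv⟩ ⟨e, het, hv⟩

lemma em_biUnion {V ι : Type*} [DecidableEq (Sym2 V)] [Fintype ι] {G : SimpleGraph V}
    {B : ι → Finset (Sym2 V)}
    (hB : ∀ i, EdgeMatching G (B i))
    (hd : ∀ i j, i ≠ j → ∀ v ∈ emSupp (B i), v ∉ emSupp (B j)) :
    EdgeMatching G (Finset.univ.biUnion B) ∧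
      (Finset.univ.biUnion B).card = ∑ i : ι, (B i).card := by
  classical
  refine ⟨⟨?_, ?_⟩, ?_⟩
  · intro e he
    rw [Finset.mem_coe, Finset.mem_biUnion] at he
    obtain ⟨i, -, he⟩ := he
    exact (hB i).1 he
  · intro e he f hf hne v hve hvf
    obtain ⟨i, -, he⟩ := Finset.mem_biUnion.1 he
    obtain ⟨j, -, hf⟩ := Finset.mem_biUnion.1 hf
    rcases eq_or_ne i j with rfl | hij
    · exact (hB i).2 e he f hf hne v hve hvf
    · exact hd i j hij v ⟨e, he, hve⟩ ⟨f, hf, hvf⟩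
  · refine Finset.card_biUnion ?_
    intro i _ j _ hij
    refine Finset.disjoint_left.2 ?_
    intro e he hef
    have hv : e.out.1 ∈ e := Sym2.out_fst_mem e
    set v := e.out.1
    exact hd i j hij v ⟨e, he, hv⟩ ⟨e, hef, hv⟩


section GraphLemmas
variable {β' : Type*} {X' : SimpleGraph β'}

lemma cone_adj_some_some {a b : β'} : (cone X').Adj (some a) (some b) ↔ X'.Adj a b := by
  rw [cone, fromRel_adj]
  constructor
  · rintro ⟨hne, h | h⟩
    · rcases h with h | ⟨x, y, hx, hy, hxy⟩
      · exact absurd h (by simp)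
      · obtain rfl : a = x := by injection hx
        obtain rfl : b = y := by injection hy
        exact hxy
    · rcases h with h | ⟨x, y, hx, hy, hxy⟩
      · exact absurd h (by simp)
      · obtain rfl : b = x := by injection hx
        obtain rfl : a = y := by injection hy
        exact hxy.symm
  · intro h
    exact ⟨by simpa using h.ne, Or.inl (Or.inr ⟨a, b, rfl, rfl, h⟩)⟩

lemma cone_adj_none_some (b : β') : (cone X').Adj none (some b) := by
  rw [cone, fromRel_adj]
  exact ⟨by simp, Or.inl (Or.inl rfl)⟩

lemma cone_adj_cases {u v : Option β'} (h : (cone X').Adj u v) :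
    (∃ b, (u = none ∧ v = some b) ∨ (v = none ∧ u = some b)) ∨
    (∃ a b, u = some a ∧ v = some b ∧ X'.Adj a b) := by
  match u, v with
  | none, none => exact absurd rfl h.ne
  | none, some b => exact Or.inl ⟨b, Or.inl ⟨rfl, rfl⟩⟩
  | some a, none => exact Or.inl ⟨a, Or.inr ⟨rfl, rfl⟩⟩
  | some a, some b => exact Or.inr ⟨a, b, rfl, rfl, cone_adj_some_some.1 h⟩

variable {α : Type*} {β : α → Type*} {H : SimpleGraph α} {X : ∀ i, SimpleGraph (β i)}

lemma corona_adj_inl_inl {a b : α} :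
    (corona H X).Adj (Sum.inl a) (Sum.inl b) ↔ H.Adj a b := by
  rw [corona, fromRel_adj]
  constructor
  · rintro ⟨hne, h | h⟩
    · exact h
    · exact h.symm
  · intro h
    exact ⟨by simpa using h.ne, Or.inl h⟩

lemma corona_adj_inl_inr {a : α} {p : Σ i, β i} :
    (corona H X).Adj (Sum.inl a) (Sum.inr p) ↔ a = p.1 := by
  rw [corona, fromRel_adj]
  constructor
  · rintro ⟨hne, h | h⟩
    · exact h
    · exact absurd h (by simp [corona])
  · intro h
    exact ⟨by simp, Or.inl h⟩

lemma corona_adj_inr_inr_fst {p q : Σ i, β i} (h : (corona H X).Adj (Sum.inr p) (Sum.inr q)) :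
    p.1 = q.1 := by
  rw [corona, fromRel_adj] at h
  rcases h.2 with ⟨h', -⟩ | ⟨h', -⟩
  · exact h'
  · exact h'.symm

lemma corona_adj_inr_inr {i : α} {x y : β i} :
    (corona H X).Adj (Sum.inr ⟨i, x⟩) (Sum.inr ⟨i, y⟩) ↔ (X i).Adj x y := by
  rw [corona, fromRel_adj]
  constructor
  · rintro ⟨hne, ⟨h, hadj⟩ | ⟨h, hadj⟩⟩
    · exact hadj
    · exact hadj.symm
  · intro h
    refine ⟨?_, Or.inl ⟨rfl, h⟩⟩
    intro hc
    have hxy : x = y := by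
      have h2 := Sum.inr.inj hc
      exact eq_of_heq (Sigma.mk.inj_iff.1 h2).2
    exact h.ne hxy

lemma corona_adj_inl_inl_of_inr {a : α} {p : Σ i, β i}
    (h : (corona H X).Adj (Sum.inr p) (Sum.inl a)) : p.1 = a := by
  exact (corona_adj_inl_inr.1 h.symm).symm

end GraphLemmas

section ConeNum
variable {β' : Type*} [Finite β'] {X' : SimpleGraph β'}

lemma finite_option {γ : Type*} [Finite γ] : Finite (Option γ) := by
  have := Fintype.ofFinite γ; infer_instance

attribute [local instance] finite_option

lemma emNum_le_cone : emNum X' ≤ emNum (cone X') := by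
  classical
  refine emNum_le fun s hs => ?_
  have h := em_map (G' := cone X') (fun b : β' => some b)
    (fun a b hab => cone_adj_some_some.2 ((mem_edgeSet X').1 (hs.1 hab)))
    (fun v _ w _ h => Option.some.inj h) hs
  rw [← h.2]
  exact le_emNum h.1

lemma cone_demote {s : Finset (Sym2 (Option β'))} (hs : EdgeMatching (cone X') s)
    (hn : none ∉ emSupp s) : s.card ≤ emNum X' := by
  classical
  rcases Finset.eq_empty_or_nonempty s with rfl | ⟨e0, he0⟩
  · simp
  have hb0 : ∃ b : β', True := by
    have hv : e0.out.1 ∈ e0 := Sym2.out_fst_mem e0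
    match hu : e0.out.1 with
    | none => exact absurd ⟨e0, he0, hu ▸ hv⟩ hn
    | some b => exact ⟨b, trivial⟩
  obtain ⟨b0, -⟩ := hb0
  have hsome : ∀ v ∈ emSupp s, ∃ b, v = some b := by
    rintro v hvs
    match v with
    | none => exact absurd hvs hn
    | some b => exact ⟨b, rfl⟩
  have h := em_map (G' := X') (fun o : Option β' => o.getD b0)
    (fun a b hab => ?_) (fun v hv w hw hgw => ?_) hs
  · rw [← h.2]
    exact le_emNum h.1
  · -- adjacency
    have hadj := (mem_edgeSet (cone X')).1 (hs.1 hab)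
    have ha : ∃ x, a = some x := hsome a ⟨_, hab, Sym2.mem_mk_left a b⟩
    have hbb : ∃ x, b = some x := hsome b ⟨_, hab, Sym2.mem_mk_right a b⟩
    obtain ⟨x, rfl⟩ := ha
    obtain ⟨y, rfl⟩ := hbb
    simpa using cone_adj_some_some.1 hadj
  · obtain ⟨x, rfl⟩ := hsome v hv
    obtain ⟨y, rfl⟩ := hsome w hw
    simpa using hgw

end ConeNum

section Main
variable {α : Type*} [Fintype α] {β : α → Type*} [∀ i, Fintype (β i)]
  (H : SimpleGraph α) (X : ∀ i, SimpleGraph (β i)) (F : Set α)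

attribute [local instance] finite_option

lemma induce_adj' {s : Set α} {a b : ↥s} (h : (H.induce s).Adj a b) : H.Adj a.1 b.1 := h

lemma induce_adj2 {s : Set α} {a b : ↥s} (h : H.Adj a.1 b.1) : (H.induce s).Adj a b := h

def coneEmb {α : Type*} {β : α → Type*} (i : α) : Option (β i) → α ⊕ Σ i, β i :=
  fun o => o.elim (Sum.inl i) (fun x => Sum.inr ⟨i, x⟩)

@[simp] lemma coneEmb_none {α : Type*} {β : α → Type*} (i : α) :
    coneEmb (β := β) i none = Sum.inl i := rfl

@[simp] lemma coneEmb_some {α : Type*} {β : α → Type*} (i : α) (x : β i) :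
    coneEmb (β := β) i (some x) = Sum.inr ⟨i, x⟩ := rfl

set_option maxHeartbeats 1000000 in
lemma lower_bound (hFi : ∀ i, i ∈ F ↔ emNum (X i) = emNum (cone (X i))) :
    emNum (H.induce F) + ∑ i : α, emNum (cone (X i)) ≤ emNum (corona H X) := by
  classical
  have ht : ∀ i : α, ∃ u : Finset (Sym2 (Option (β i))), EdgeMatching (cone (X i)) u ∧
      u.card = emNum (cone (X i)) ∧ (i ∈ F → none ∉ emSupp u) := by
    intro i
    by_cases hiF : i ∈ F
    · obtain ⟨s, hs, hc⟩ := exists_max_em (X i)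
      have h := em_map (G' := cone (X i)) (fun b => some b)
        (fun a b hab => cone_adj_some_some.2 ((mem_edgeSet _).1 (hs.1 hab)))
        (fun v _ w _ h => Option.some.inj h) hs
      refine ⟨_, h.1, ?_, fun _ hn => ?_⟩
      · rw [h.2, hc]
        exact (hFi i).1 hiF
      · obtain ⟨u, -, hu⟩ := emSupp_image hn
        simp at hu
    · obtain ⟨u, h1, h2⟩ := exists_max_em (cone (X i))
      exact ⟨u, h1, h2, fun h => absurd h hiF⟩
  choose t ht1 ht2 ht3 using ht
  have hBmap : ∀ i, EdgeMatching (corona H X) ((t i).image (Sym2.map (coneEmb i))) ∧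
      ((t i).image (Sym2.map (coneEmb i))).card = (t i).card := by
    intro i
    refine em_map (coneEmb i) (fun a b hab => ?_) (fun v _ w _ hvw => ?_) (ht1 i)
    · have hc := (mem_edgeSet _).1 ((ht1 i).1 hab)
      rcases cone_adj_cases hc with ⟨b', ⟨rfl, rfl⟩ | ⟨rfl, rfl⟩⟩ | ⟨x, y, rfl, rfl, hxy⟩
      · exact corona_adj_inl_inr.2 rfl
      · exact (corona_adj_inl_inr.2 rfl).symm
      · exact corona_adj_inr_inr.2 hxy
    · match v, w with
      | none, none => rfl
      | none, some y => exact absurd hvw (by simp)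
      | some x, none => exact absurd hvw (by simp)
      | some x, some y =>
        simp only [coneEmb_some] at hvw
        have := Sum.inr.inj hvw
        rw [eq_of_heq (Sigma.mk.inj_iff.1 this).2]
  set B : α → Finset (Sym2 (α ⊕ Σ i, β i)) := fun i => (t i).image (Sym2.map (coneEmb i)) with hB
  have hsuppB : ∀ i v, v ∈ emSupp (B i) → v = Sum.inl i ∨ ∃ x, v = Sum.inr ⟨i, x⟩ := by
    intro i v hv
    obtain ⟨u, -, rfl⟩ := emSupp_image hv
    match u with
    | none => exact Or.inl rfl
    | some x => exact Or.inr ⟨x, rfl⟩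
  have hsuppBF : ∀ i, i ∈ F → ∀ v ∈ emSupp (B i), ∃ x, v = Sum.inr ⟨i, x⟩ := by
    intro i hiF v hv
    obtain ⟨u, hu, rfl⟩ := emSupp_image hv
    match u with
    | none => exact absurd hu (ht3 i hiF)
    | some x => exact ⟨x, rfl⟩
  obtain ⟨A0, hA0, hA0c⟩ := exists_max_em (H.induce F)
  have hAmap := em_map (G' := corona H X) (fun a : ↥F => Sum.inl a.1)
    (fun a b hab => corona_adj_inl_inl.2 (induce_adj' H ((mem_edgeSet _).1 (hA0.1 hab))))
    (fun v _ w _ h => Subtype.ext (Sum.inl.inj h)) hA0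
  set A : Finset (Sym2 (α ⊕ Σ i, β i)) := A0.image (Sym2.map (fun a : ↥F => Sum.inl a.1))
    with hA
  have hsuppA : ∀ v ∈ emSupp A, ∃ a : α, a ∈ F ∧ v = Sum.inl a := by
    intro v hv
    obtain ⟨u, -, rfl⟩ := emSupp_image hv
    exact ⟨u.1, u.2, rfl⟩
  have hBB := em_biUnion (G := corona H X) (B := B) (fun i => (hBmap i).1) ?_
  swap
  · intro i j hij v hvi hvj
    rcases hsuppB i v hvi with rfl | ⟨x, rfl⟩ <;> rcases hsuppB j _ hvj with h | ⟨y, h⟩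
    · exact hij (Sum.inl.inj h)
    · simp at h
    · simp at h
    · exact hij (congrArg Sigma.fst (Sum.inr.inj h))
  have hU := em_union hAmap.1 hBB.1 ?_
  swap
  · intro v hvA hvB
    obtain ⟨a, haF, rfl⟩ := hsuppA v hvA
    obtain ⟨e, he, hve⟩ := hvB
    obtain ⟨i, -, hei⟩ := Finset.mem_biUnion.1 he
    have hvBi : Sum.inl a ∈ emSupp (B i) := ⟨e, hei, hve⟩
    rcases hsuppB i _ hvBi with h | ⟨x, h⟩
    · have hai : a = i := Sum.inl.inj h
      subst hai
      obtain ⟨x, hx⟩ := hsuppBF a haF _ hvBi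
      simp at hx
    · simp at h
  calc emNum (H.induce F) + ∑ i : α, emNum (cone (X i))
      = (A ∪ Finset.univ.biUnion B).card := by
        rw [hU.2, hBB.2, hAmap.2, hA0c]
        congr 1
        exact Finset.sum_congr rfl fun i _ => ((hBmap i).2.trans (ht2 i)).symm
    _ ≤ emNum (corona H X) := le_emNum hU.1

lemma em_subset {V : Type*} {G : SimpleGraph V} {s t : Finset (Sym2 V)}
    (h : EdgeMatching G s) (hts : t ⊆ s) : EdgeMatching G t :=
  ⟨fun e he => h.1 (hts he), fun e he f hf => h.2 e (hts he) f (hts hf)⟩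

lemma corona_edge_struct {e : Sym2 (α ⊕ Σ i, β i)} (he : e ∈ (corona H X).edgeSet)
    {i : α} {x : β i} (hx : Sum.inr ⟨i, x⟩ ∈ e) :
    ∀ w ∈ e, w = Sum.inl i ∨ ∃ y : β i, w = Sum.inr ⟨i, y⟩ := by
  obtain ⟨u, rfl⟩ := Sym2.mem_iff_exists.1 hx
  have hadj : (corona H X).Adj (Sum.inr ⟨i, x⟩) u := (mem_edgeSet _).1 he
  intro w hw
  rcases Sym2.mem_iff.1 hw with rfl | h2
  · exact Or.inr ⟨x, rfl⟩
  · rw [h2]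
    rcases u with a | ⟨j, y⟩
    · exact Or.inl (by rw [corona_adj_inl_inr.1 hadj.symm])
    · have hij : i = j := corona_adj_inr_inr_fst hadj
      subst hij
      exact Or.inr ⟨y, rfl⟩

lemma corona_edge_idx {e : Sym2 (α ⊕ Σ i, β i)} (he : e ∈ (corona H X).edgeSet)
    {i : α} {x : β i} (hx : Sum.inr ⟨i, x⟩ ∈ e)
    {j : α} {y : β j} (hy : Sum.inr ⟨j, y⟩ ∈ e) : i = j := by
  rcases corona_edge_struct H X he hx _ hy with h | ⟨y', h⟩
  · exact absurd h (by simp)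
  · exact (congrArg Sigma.fst (Sum.inr.inj h)).symm

set_option maxHeartbeats 2000000 in
lemma upper_bound (hFi : ∀ i, i ∈ F ↔ emNum (X i) = emNum (cone (X i))) :
    emNum (corona H X) ≤ emNum (H.induce F) + ∑ i : α, emNum (cone (X i)) := by
  classical
  obtain ⟨T, hT, hTc⟩ := exists_max_em (corona H X)
  set TH : Finset (Sym2 (α ⊕ Σ i, β i)) :=
    T.filter (fun e => ∀ v ∈ e, ∃ a, v = Sum.inl a) with hTHdef
  set Ti : α → Finset (Sym2 (α ⊕ Σ i, β i)) :=
    (fun i => T.filter (fun e => ∃ x : β i, Sum.inr ⟨i, x⟩ ∈ e)) with hTidef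
  have hTHsub : TH ⊆ T := Finset.filter_subset _ _
  have hTisub : ∀ i, Ti i ⊆ T := fun i => Finset.filter_subset _ _
  have hTHmem : ∀ e ∈ TH, ∀ v ∈ e, ∃ a, v = Sum.inl a :=
    fun e he => (Finset.mem_filter.1 he).2
  have hTix : ∀ i, ∀ e ∈ Ti i, ∃ x : β i, Sum.inr ⟨i, x⟩ ∈ e :=
    fun i e he => (Finset.mem_filter.1 he).2
  have hTimem : ∀ i, ∀ e ∈ Ti i, ∀ w ∈ e, w = Sum.inl i ∨ ∃ y : β i, w = Sum.inr ⟨i, y⟩ := by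
    intro i e he
    obtain ⟨x, hx⟩ := hTix i e he
    exact corona_edge_struct H X (hT.1 (hTisub i he)) hx
  -- partition of T
  have hpart : T = TH ∪ Finset.univ.biUnion Ti := by
    ext e
    simp only [Finset.mem_union, Finset.mem_biUnion, hTHdef, hTidef, Finset.mem_filter,
      Finset.mem_univ, true_and]
    constructor
    · intro he
      obtain ⟨u, v, rfl⟩ : ∃ u v, e = s(u, v) := by
        induction e using Sym2.ind with
        | _ u v => exact ⟨u, v, rfl⟩
      have hadj : (corona H X).Adj u v := (mem_edgeSet _).1 (hT.1 he)
      rcases u with a | ⟨i, x⟩ <;> rcases v with b | ⟨j, y⟩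
      · refine Or.inl ⟨he, ?_⟩
        intro w hw
        rcases Sym2.mem_iff.1 hw with rfl | rfl
        · exact ⟨a, rfl⟩
        · exact ⟨b, rfl⟩
      · exact Or.inr ⟨j, he, y, Sym2.mem_mk_right _ _⟩
      · exact Or.inr ⟨i, he, x, Sym2.mem_mk_left _ _⟩
      · exact Or.inr ⟨i, he, x, Sym2.mem_mk_left _ _⟩
    · rintro (⟨he, -⟩ | ⟨i, he, -⟩) <;> exact he
  -- cards
  have hdisj1 : Disjoint TH (Finset.univ.biUnion Ti) := by
    rw [Finset.disjoint_left]
    intro e he hbi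
    obtain ⟨i, -, hei⟩ := Finset.mem_biUnion.1 hbi
    obtain ⟨x, hx⟩ := hTix i e hei
    obtain ⟨a, ha⟩ := hTHmem e he _ hx
    simp at ha
  have hcard : T.card = TH.card + ∑ i : α, (Ti i).card := by
    rw [hpart, Finset.card_union_of_disjoint hdisj1, Finset.card_biUnion]
    intro i _ j _ hij
    rw [Function.onFun, Finset.disjoint_left]
    intro e hei hej
    obtain ⟨x, hx⟩ := hTix i e hei
    obtain ⟨y, hy⟩ := hTix j e hej
    exact hij (corona_edge_idx H X (hT.1 (hTisub i hei)) hx hy)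
  -- the H-part
  set gH : (α ⊕ Σ i, β i) → α := Sum.elim id (fun p => p.1) with hgH
  have hNadj : ∀ a b, s(a, b) ∈ TH → H.Adj (gH a) (gH b) := by
    intro a b hab
    obtain ⟨a', ha'⟩ := hTHmem _ hab a (Sym2.mem_mk_left a b)
    obtain ⟨b', hb'⟩ := hTHmem _ hab b (Sym2.mem_mk_right a b)
    subst ha'; subst hb'
    exact corona_adj_inl_inl.1 ((mem_edgeSet _).1 (hT.1 (hTHsub hab)))
  have hNinj : ∀ v ∈ emSupp TH, ∀ w ∈ emSupp TH, gH v = gH w → v = w := by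
    rintro v ⟨e, he, hve⟩ w ⟨f, hf, hwf⟩ hgvw
    obtain ⟨a, rfl⟩ := hTHmem e he v hve
    obtain ⟨b, rfl⟩ := hTHmem f hf w hwf
    simpa [hgH] using hgvw
  have hNmap := em_map gH hNadj hNinj (em_subset hT hTHsub)
  set N : Finset (Sym2 α) := TH.image (Sym2.map gH) with hNdef
  have hsuppN : ∀ a ∈ emSupp N, Sum.inl a ∈ emSupp TH := by
    intro a ha
    obtain ⟨u, hu, rfl⟩ := emSupp_image ha
    obtain ⟨e, he, hue⟩ := hu
    obtain ⟨a', rfl⟩ := hTHmem e he u hue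
    exact ⟨e, he, hue⟩
  set Sb : Finset α := Finset.univ.filter (fun a => Sum.inl a ∈ emSupp TH ∧ a ∉ F) with hSbdef
  -- Claim A
  have claimA : TH.card ≤ emNum (H.induce F) + Sb.card := by
    set N' : Finset (Sym2 α) := N.filter (fun e => ∀ a ∈ e, a ∈ F) with hN'def
    have hN'sub : N' ⊆ N := Finset.filter_subset _ _
    have hNsplit : N.card ≤ N'.card + Sb.card := by
      have hsd : N.card = N'.card + (N \ N').card := by
        rw [← Finset.card_union_of_disjoint (Finset.disjoint_sdiff), Finset.union_sdiff_of_subset hN'sub]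
      rw [hsd]
      refine Nat.add_le_add_left ?_ _
      refine Finset.card_le_card_of_injOn
        (fun e => if h : ∃ a ∈ e, a ∉ F then h.choose else e.out.1) ?_ ?_
      · intro e he
        rw [Finset.mem_coe, Finset.mem_sdiff, hN'def, Finset.mem_filter] at he
        have hbad : ∃ a ∈ e, a ∉ F := by
          by_contra hcon
          push_neg at hcon
          exact he.2 ⟨he.1, hcon⟩
        simp only [dif_pos hbad]
        have h1 := hbad.choose_spec.1
        have h2 := hbad.choose_spec.2
        rw [Finset.mem_coe, hSbdef, Finset.mem_filter]
        exact ⟨Finset.mem_univ _, hsuppN _ ⟨e, he.1, h1⟩, h2⟩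
      · intro e1 he1 e2 he2 heq
        rw [Finset.mem_coe, Finset.mem_sdiff] at he1 he2
        have hb1 : ∃ a ∈ e1, a ∉ F := by
          by_contra hcon; push_neg at hcon
          exact he1.2 (Finset.mem_filter.2 ⟨he1.1, hcon⟩)
        have hb2 : ∃ a ∈ e2, a ∉ F := by
          by_contra hcon; push_neg at hcon
          exact he2.2 (Finset.mem_filter.2 ⟨he2.1, hcon⟩)
        simp only [dif_pos hb1, dif_pos hb2] at heq
        by_contra hne
        exact hNmap.1.2 e1 he1.1 e2 he2.1 hne _ hb1.choose_spec.1 (heq ▸ hb2.choose_spec.1)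
    have hN'le : N'.card ≤ emNum (H.induce F) := by
      rcases Finset.eq_empty_or_nonempty N' with h | ⟨e0, he0⟩
      · simp [h]
      · have he0' := Finset.mem_filter.1 he0
        have ha0 : e0.out.1 ∈ F := he0'.2 _ (Sym2.out_fst_mem e0)
        set a0 : ↥F := ⟨e0.out.1, ha0⟩
        set gF : α → ↥F := fun a => if h : a ∈ F then ⟨a, h⟩ else a0 with hgF
        have hmem' : ∀ e ∈ N', ∀ a ∈ e, a ∈ F := fun e he => (Finset.mem_filter.1 he).2
        have hadj' : ∀ a b, s(a, b) ∈ N' → (H.induce F).Adj (gF a) (gF b) := by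
          intro a b hab
          have haF : a ∈ F := hmem' _ hab a (Sym2.mem_mk_left a b)
          have hbF : b ∈ F := hmem' _ hab b (Sym2.mem_mk_right a b)
          have hHadj : H.Adj a b := (mem_edgeSet H).1 (hNmap.1.1 (hN'sub hab))
          have h1 : gF a = ⟨a, haF⟩ := dif_pos haF
          have h2 : gF b = ⟨b, hbF⟩ := dif_pos hbF
          rw [h1, h2]
          exact induce_adj2 H hHadj
        have hinj' : ∀ v ∈ emSupp N', ∀ w ∈ emSupp N', gF v = gF w → v = w := by
          rintro v ⟨e, he, hve⟩ w ⟨f, hf, hwf⟩ hgvw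
          have hvF := hmem' _ he _ hve
          have hwF := hmem' _ hf _ hwf
          rw [hgF] at hgvw
          simp only [dif_pos hvF, dif_pos hwF] at hgvw
          exact congrArg Subtype.val hgvw
        have h := em_map gF hadj' hinj' (em_subset hNmap.1 hN'sub)
        rw [← h.2]
        exact le_emNum h.1
    calc TH.card = N.card := hNmap.2.symm
      _ ≤ N'.card + Sb.card := hNsplit
      _ ≤ emNum (H.induce F) + Sb.card := Nat.add_le_add_right hN'le _
  -- Claim B
  have claimB : ∀ i, (Ti i).card ≤ emNum (cone (X i)) ∧
      (i ∈ Sb → (Ti i).card + 1 ≤ emNum (cone (X i))) := by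
    intro i
    set gC : (α ⊕ Σ j, β j) → Option (β i) :=
      Sum.elim (fun _ => none) (fun p => if h : p.1 = i then some (h ▸ p.2) else none) with hgC
    have hgCr : ∀ y : β i, gC (Sum.inr ⟨i, y⟩) = some y := fun y => dif_pos rfl
    have hCadj : ∀ a b, s(a, b) ∈ Ti i → (cone (X i)).Adj (gC a) (gC b) := by
      intro a b hab
      have hadj : (corona H X).Adj a b := (mem_edgeSet _).1 (hT.1 (hTisub i hab))
      have h1 := hTimem i _ hab a (Sym2.mem_mk_left a b)
      have h2 := hTimem i _ hab b (Sym2.mem_mk_right a b)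
      rcases h1 with rfl | ⟨x, rfl⟩ <;> rcases h2 with hb | ⟨y, hb⟩
      · exact absurd hb hadj.ne'
      · rw [hb, hgCr]
        exact cone_adj_none_some y
      · rw [hb, hgCr] at *
        exact (cone_adj_none_some x).symm
      · rw [hb] at hadj ⊢
        rw [hgCr, hgCr]
        exact cone_adj_some_some.2 (corona_adj_inr_inr.1 hadj)
    have hCinj : ∀ v ∈ emSupp (Ti i), ∀ w ∈ emSupp (Ti i), gC v = gC w → v = w := by
      rintro v ⟨e, he, hve⟩ w ⟨f, hf, hwf⟩ hgvw
      rcases hTimem i e he v hve with rfl | ⟨x, rfl⟩ <;>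
        rcases hTimem i f hf w hwf with hw | ⟨y, hw⟩
      · rw [hw]
      · rw [hw, hgCr] at hgvw
        exact absurd hgvw (by simp [hgC])
      · rw [hw] at hgvw
        rw [hgCr] at hgvw
        exact absurd hgvw (by simp [hgC])
      · rw [hw] at hgvw ⊢
        rw [hgCr, hgCr] at hgvw
        rw [Option.some.inj hgvw]
    have hCmap := em_map gC hCadj hCinj (em_subset hT (hTisub i))
    constructor
    · rw [← hCmap.2]
      exact le_emNum hCmap.1
    · intro hiSb
      rw [hSbdef, Finset.mem_filter] at hiSb
      obtain ⟨-, hiTH, hiF⟩ := hiSb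
      -- inl i not in supp of Ti i
      have hinl : Sum.inl i ∉ emSupp (Ti i) := by
        rintro ⟨e, he, hie⟩
        obtain ⟨e', he', hie'⟩ := hiTH
        have hne : e ≠ e' := by
          rintro rfl
          obtain ⟨x, hx⟩ := hTix i e he
          obtain ⟨a, ha⟩ := hTHmem e he' _ hx
          simp at ha
        exact hT.2 e (hTisub i he) e' (hTHsub he') hne _ hie hie'
      have hnone : none ∉ emSupp ((Ti i).image (Sym2.map gC)) := by
        intro hn
        obtain ⟨u, hu, hgu⟩ := emSupp_image hn
        obtain ⟨e, he, hue⟩ := hu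
        rcases hTimem i e he u hue with rfl | ⟨x, rfl⟩
        · exact hinl ⟨e, he, hue⟩
        · rw [hgCr] at hgu
          exact absurd hgu (by simp)
      have hdem : ((Ti i).image (Sym2.map gC)).card ≤ emNum (X i) :=
        cone_demote hCmap.1 hnone
      have hlt : emNum (X i) < emNum (cone (X i)) :=
        lt_of_le_of_ne emNum_le_cone (fun h => hiF ((hFi i).2 h))
      rw [← hCmap.2]
      omega
  -- assemble
  have hsum : (∑ i : α, (Ti i).card) + Sb.card ≤ ∑ i : α, emNum (cone (X i)) := by
    have hsplit : ∀ f : α → ℕ, ∑ i : α, f i = ∑ i ∈ Sb, f i + ∑ i ∈ Sbᶜ, f i :=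
      fun f => (Finset.sum_add_sum_compl Sb f).symm
    rw [hsplit (fun i => (Ti i).card), hsplit (fun i => emNum (cone (X i)))]
    have h1 : ∑ i ∈ Sb, (Ti i).card + Sb.card ≤ ∑ i ∈ Sb, emNum (cone (X i)) := by
      have := Finset.sum_le_sum (fun i hi => (claimB i).2 hi)
      simpa [Finset.sum_add_distrib] using this
    have h2 : ∑ i ∈ Sbᶜ, (Ti i).card ≤ ∑ i ∈ Sbᶜ, emNum (cone (X i)) :=
      Finset.sum_le_sum (fun i _ => (claimB i).1)
    omega
  rw [← hTc, hcard]
  omega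

end Main

theorem stmt_5 {α : Type*} [Fintype α] {β : α → Type*} [∀ i, Fintype (β i)]
    (H : SimpleGraph α) (X : ∀ i, SimpleGraph (β i))
    (F : Set α) (hF : F = {i | matchNum (X i) = matchNum (cone (X i))}) :
    matchNum (corona H X) = matchNum (H.induce F) + ∑ i : α, matchNum (cone (X i)) := by
  have hFi : ∀ i, i ∈ F ↔ emNum (X i) = emNum (cone (X i)) := by
    intro i
    rw [hF, Set.mem_setOf_eq, matchNum_eq_emNum, matchNum_eq_emNum]
  rw [matchNum_eq_emNum, matchNum_eq_emNum]
  have hc : ∀ i : α, matchNum (cone (X i)) = emNum (cone (X i)) :=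
    fun i => matchNum_eq_emNum _
  simp_rw [hc]
  exact le_antisymm (upper_bound H X F hFi) (lower_bound H X F hFi)
end

section
/- A graph X has a unique almost perfect matching if and only if X is the disjoint union of a graph with a unique perfect matching and a single isolated vertex K_1. -/
open SimpleGraph

section Helpers

variable {V : Type*} {X : SimpleGraph V}

/-- Lift a subgraph of an induced subgraph to a subgraph of the big graph. -/
def liftSub (s : Set V) (M : (X.induce s).Subgraph) : X.Subgraph where
  verts := Subtype.val '' M.verts
  Adj a b := ∃ (ha : a ∈ s) (hb : b ∈ s), M.Adj ⟨a, ha⟩ ⟨b, hb⟩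
  adj_sub := by rintro a b ⟨ha, hb, h⟩; exact M.adj_sub h
  edge_vert := by rintro a b ⟨ha, hb, h⟩; exact ⟨⟨a, ha⟩, M.edge_vert h, rfl⟩
  symm := by constructor; rintro a b ⟨ha, hb, h⟩; exact ⟨hb, ha, h.symm⟩

/-- Restrict a subgraph of the big graph to an induced subgraph. -/
def resSub (s : Set V) (N : X.Subgraph) : (X.induce s).Subgraph where
  verts := Subtype.val ⁻¹' N.verts
  Adj a b := N.Adj a b
  adj_sub := fun h => N.adj_sub h
  edge_vert := fun h => N.edge_vert h
  symm := ⟨fun _ _ h => h.symm⟩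

lemma res_lift (s : Set V) (M : (X.induce s).Subgraph) : resSub s (liftSub s M) = M := by
  ext a b
  · constructor
    · rintro ⟨x, hx, hxa⟩
      rwa [show x = a from Subtype.ext hxa] at hx
    · intro h; exact ⟨a, h, rfl⟩
  · constructor
    · rintro ⟨ha, hb, h⟩
      convert h <;> exact Subtype.ext rfl
    · intro h; exact ⟨a.2, b.2, h⟩

lemma lift_res (s : Set V) (N : X.Subgraph) (hver : N.verts ⊆ s) :
    liftSub s (resSub s N) = N := by
  ext a b
  · constructor
    · rintro ⟨x, hx, rfl⟩; exact hx
    · intro h; exact ⟨⟨a, hver h⟩, h, rfl⟩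
  · constructor
    · rintro ⟨ha, hb, h⟩; exact h
    · intro h
      exact ⟨hver (N.edge_vert h), hver (N.edge_vert h.symm), h⟩

lemma lift_isMatching {s : Set V} {M : (X.induce s).Subgraph} (hM : M.IsMatching) :
    (liftSub s M).IsMatching := by
  rintro a ⟨x, hx, rfl⟩
  obtain ⟨w, hw, hu⟩ := hM hx
  refine ⟨w.val, ⟨x.2, w.2, hw⟩, ?_⟩
  rintro b ⟨hb1, hb2, hadj⟩
  have hx2 : M.Adj x ⟨b, hb2⟩ := by convert hadj
  exact congrArg Subtype.val (hu _ hx2)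

lemma res_isMatching {s : Set V} {N : X.Subgraph} (hN : N.IsMatching)
    (hver : N.verts ⊆ s) : (resSub s N).IsMatching := by
  rintro a ha
  obtain ⟨w, hw, hu⟩ := hN ha
  refine ⟨⟨w, hver (N.edge_vert hw.symm)⟩, hw, ?_⟩
  rintro b hb
  exact Subtype.ext (hu b.val hb)

/-- If the almost perfect matching is unique, the unsaturated vertex is isolated. -/
lemma swap_lemma {M : X.Subgraph} (hM : M.IsMatching)
    (huniq : ∀ N : X.Subgraph, (N.IsMatching ∧ ∃ v, N.verts = {v}ᶜ) → N = M)
    {u w : V} (hverts : M.verts = {u}ᶜ) (hadj : X.Adj u w) : False := by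
  have hune : u ∉ M.verts := by rw [hverts]; simp
  have hw : w ∈ M.verts := by rw [hverts]; exact (X.ne_of_adj hadj).symm
  obtain ⟨w', hww', hwu⟩ := hM hw
  have hw' : w' ∈ M.verts := M.edge_vert hww'.symm
  have huw' : u ≠ w' := fun h => hune (h ▸ hw')
  have huw : u ≠ w := X.ne_of_adj hadj
  have hww'ne : w ≠ w' := X.ne_of_adj (M.adj_sub hww')
  -- partner of w' is w
  have hpart : ∀ x, M.Adj x w' → x = w := by
    intro x hx
    obtain ⟨z, hz, hzu⟩ := hM hw'
    rw [hzu x hx.symm, ← hzu w hww'.symm]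
  set N : X.Subgraph := {
    verts := {w'}ᶜ
    Adj := fun x y => (M.Adj x y ∧ x ≠ w' ∧ y ≠ w') ∨ (x = u ∧ y = w) ∨ (x = w ∧ y = u)
    adj_sub := by
      rintro a b (⟨h, -, -⟩ | ⟨rfl, rfl⟩ | ⟨rfl, rfl⟩)
      · exact M.adj_sub h
      · exact hadj
      · exact hadj.symm
    edge_vert := by
      rintro a b (⟨-, h, -⟩ | ⟨rfl, rfl⟩ | ⟨rfl, rfl⟩)
      · exact h
      · exact huw'
      · exact hww'ne
    symm := by
      constructor
      rintro a b (⟨h, h1, h2⟩ | ⟨rfl, rfl⟩ | ⟨rfl, rfl⟩)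
      · exact Or.inl ⟨h.symm, h2, h1⟩
      · exact Or.inr (Or.inr ⟨rfl, rfl⟩)
      · exact Or.inr (Or.inl ⟨rfl, rfl⟩) } with hNdef
  have hNmatch : N.IsMatching := by
    intro x hx
    have hxw' : x ≠ w' := hx
    by_cases hxu : x = u
    · subst hxu
      refine ⟨w, Or.inr (Or.inl ⟨rfl, rfl⟩), ?_⟩
      rintro y (⟨h, -, -⟩ | ⟨-, rfl⟩ | ⟨h, -⟩)
      · exact absurd (M.edge_vert h) hune
      · rfl
      · exact absurd h huw
    · by_cases hxw : x = w
      · subst hxw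
        refine ⟨u, Or.inr (Or.inr ⟨rfl, rfl⟩), ?_⟩
        rintro y (⟨h, -, hy⟩ | ⟨h, -⟩ | ⟨-, rfl⟩)
        · exact absurd (hwu y h) hy
        · exact absurd h hxu
        · rfl
      · have hxv : x ∈ M.verts := by rw [hverts]; exact hxu
        obtain ⟨y, hy, hyu⟩ := hM hxv
        have hyw' : y ≠ w' := fun h => hxw (hpart x (h ▸ hy))
        refine ⟨y, Or.inl ⟨hy, hxw', hyw'⟩, ?_⟩
        rintro z (⟨h, -, -⟩ | ⟨h, -⟩ | ⟨h, -⟩)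
        · exact hyu z h
        · exact absurd h hxu
        · exact absurd h hxw
  have hNM : N = M := huniq N ⟨hNmatch, w', rfl⟩
  have : u ∈ M.verts := by
    rw [← hNM]; exact huw'
  exact hune this

end Helpers

theorem stmt_11 {V : Type*} [Fintype V] (X : SimpleGraph V) :
    (∃! M : X.Subgraph, IsAlmostPerfectMatching M) ↔
      ∃ v : V, (∀ w, ¬ X.Adj v w) ∧
        ∃! M : (X.induce {v}ᶜ).Subgraph, M.IsPerfectMatching := by
  simp only [IsAlmostPerfectMatching]
  constructor
  · rintro ⟨M, ⟨hMm, v, hv⟩, huniq⟩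
    have huniq' : ∀ N : X.Subgraph, (N.IsMatching ∧ ∃ v, N.verts = {v}ᶜ) → N = M :=
      fun N hN => huniq N hN
    have hiso : ∀ w, ¬ X.Adj v w := fun w hadj => swap_lemma hMm huniq' hv hadj
    refine ⟨v, hiso, resSub {v}ᶜ M, ⟨?_, ?_⟩, ?_⟩
    · exact res_isMatching hMm (by rw [hv])
    · intro x
      show x.val ∈ M.verts
      rw [hv]; exact x.2
    · intro P' hP'
      have hspan : P'.verts = Set.univ := Set.eq_univ_of_forall hP'.2
      have hlift : liftSub {v}ᶜ P' = M := by
        refine huniq' _ ⟨lift_isMatching hP'.1, v, ?_⟩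
        show Subtype.val '' P'.verts = {v}ᶜ
        rw [hspan, Set.image_univ, Subtype.range_coe]
      rw [← res_lift {v}ᶜ P', hlift]
  · rintro ⟨v, hiso, P, hP, hPuniq⟩
    refine ⟨liftSub {v}ᶜ P, ⟨lift_isMatching hP.1, v, ?_⟩, ?_⟩
    · show Subtype.val '' P.verts = {v}ᶜ
      rw [Set.eq_univ_of_forall hP.2, Set.image_univ, Subtype.range_coe]
    · rintro N ⟨hNm, u, hu⟩
      have huv : u = v := by
        by_contra h
        have hvN : v ∈ N.verts := by rw [hu]; exact Ne.symm h
        obtain ⟨w, hw, -⟩ := hNm hvN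
        exact hiso w (N.adj_sub hw)
      subst huv
      have hver : N.verts ⊆ {u}ᶜ := by rw [hu]
      have hres : resSub {u}ᶜ N = P := by
        refine hPuniq _ ⟨res_isMatching hNm hver, ?_⟩
        intro x
        show x.val ∈ N.verts
        rw [hu]; exact x.2
      rw [← lift_res {u}ᶜ N hver, hres]
end
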